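/- For every state ρ on ℂ² ⊗ ℂ^n, the minimal trace-norm disturbance under local dephasing of the qubit equals the minimal trace-norm distance from the classical-quantum states: inf over 2×2 unitaries U of ‖ρ − Π_U[ρ]‖₁ = inf over classical-quantum states σ of ‖ρ − σ‖₁, where Π_U[ρ] = Σ_{i∈{0,1}} (U E_{ii} U† ⊗ I) ρ (U E_{ii} U† ⊗ I). -/

import Mathlib

open scoped Kronecker ComplexOrder
open Matrix

noncomputable def traceNorm {ι : Type*} [Fintype ι] [DecidableEq ι] (A : Matrix ι ι ℂ) : ℝ :=
  (((Matrix.posSemidef_conjTranspose_mul_self A).1.eigenvectorUnitary.1 *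
    diagonal (((↑) : ℝ → ℂ) ∘ (√·) ∘ (Matrix.posSemidef_conjTranspose_mul_self A).1.eigenvalues) *
    (star (Matrix.posSemidef_conjTranspose_mul_self A).1.eigenvectorUnitary : Matrix ι ι ℂ)).trace).re

noncomputable def l1Norm {ι κ : Type*} [Fintype ι] [Fintype κ] (A : Matrix ι κ ℂ) : ℝ :=
  ∑ i, ∑ j, ‖A i j‖

def ptranspose {α β : Type*} (ρ : Matrix (α × β) (α × β) ℂ) : Matrix (α × β) (α × β) ℂ :=
  Matrix.of fun p q => ρ (p.1, q.2) (q.1, p.2)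

noncomputable def negativity {α β : Type*} [Fintype α] [Fintype β] [DecidableEq α] [DecidableEq β]
    (ρ : Matrix (α × β) (α × β) ℂ) : ℝ :=
  (traceNorm (ptranspose ρ) - 1) / 2

def matUnit {ι : Type*} [DecidableEq ι] (i j : ι) : Matrix ι ι ℂ :=
  Matrix.single i j 1

noncomputable def mcs {n : ℕ} (t : Fin n → Fin n → ℂ) :
    Matrix (Fin n × Fin n) (Fin n × Fin n) ℂ :=
  ∑ i, ∑ j, t i j • (matUnit i j ⊗ₖ matUnit i j)

def blockOf {m n : ℕ} (ρ : Matrix (Fin m × Fin n) (Fin m × Fin n) ℂ) (i j : Fin m) :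
    Matrix (Fin n) (Fin n) ℂ :=
  Matrix.of fun k l => ρ (i, k) (j, l)

noncomputable def conjU {m n : ℕ} (U : Matrix.unitaryGroup (Fin m) ℂ)
    (ρ : Matrix (Fin m × Fin n) (Fin m × Fin n) ℂ) : Matrix (Fin m × Fin n) (Fin m × Fin n) ℂ :=
  ((U : Matrix (Fin m) (Fin m) ℂ) ⊗ₖ (1 : Matrix (Fin n) (Fin n) ℂ))ᴴ * ρ *
    ((U : Matrix (Fin m) (Fin m) ℂ) ⊗ₖ (1 : Matrix (Fin n) (Fin n) ℂ))

noncomputable def conjUV {m n : ℕ} (U : Matrix.unitaryGroup (Fin m) ℂ)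
    (V : Matrix.unitaryGroup (Fin n) ℂ)
    (ρ : Matrix (Fin m × Fin n) (Fin m × Fin n) ℂ) : Matrix (Fin m × Fin n) (Fin m × Fin n) ℂ :=
  ((U : Matrix (Fin m) (Fin m) ℂ) ⊗ₖ (V : Matrix (Fin n) (Fin n) ℂ))ᴴ * ρ *
    ((U : Matrix (Fin m) (Fin m) ℂ) ⊗ₖ (V : Matrix (Fin n) (Fin n) ℂ))

noncomputable def QNA {m n : ℕ} (ρ : Matrix (Fin m × Fin n) (Fin m × Fin n) ℂ) : ℝ :=
  ⨅ U : Matrix.unitaryGroup (Fin m) ℂ,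
    ((∑ i, ∑ j, traceNorm (blockOf (conjU U ρ) i j)) - 1) / 2

noncomputable def QNAB {m n : ℕ} (ρ : Matrix (Fin m × Fin n) (Fin m × Fin n) ℂ) : ℝ :=
  ⨅ U : Matrix.unitaryGroup (Fin m) ℂ, ⨅ V : Matrix.unitaryGroup (Fin n) ℂ,
    (l1Norm (conjUV U V ρ) - 1) / 2

/-- Local dephasing of the qubit in the basis `{U e_0, U e_1}`:
`Π_U[ρ] = Σ_i (U E_{ii} U† ⊗ I) ρ (U E_{ii} U† ⊗ I)`. -/
noncomputable def dephase {n : ℕ} (U : Matrix.unitaryGroup (Fin 2) ℂ)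
    (ρ : Matrix (Fin 2 × Fin n) (Fin 2 × Fin n) ℂ) :
    Matrix (Fin 2 × Fin n) (Fin 2 × Fin n) ℂ :=
  ∑ i : Fin 2,
    (((U : Matrix (Fin 2) (Fin 2) ℂ) * matUnit i i * (U : Matrix (Fin 2) (Fin 2) ℂ)ᴴ)
        ⊗ₖ (1 : Matrix (Fin n) (Fin n) ℂ)) * ρ *
      (((U : Matrix (Fin 2) (Fin 2) ℂ) * matUnit i i * (U : Matrix (Fin 2) (Fin 2) ℂ)ᴴ)
        ⊗ₖ (1 : Matrix (Fin n) (Fin n) ℂ))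

/-!
Write `P₀, P₁` for the projections onto `U e₀, U e₁` and `W = (P₀ - P₁) ⊗ I`, a self-inverse
unitary. Then `2 (ρ - Π_U[ρ]) = ρ - W ρ W`, and `W` fixes every classical-quantum state `σ` built
on the basis of `U`; hence `2 (ρ - Π_U[ρ]) = X - W X W` with `X = ρ - σ`, whose trace norm is at
most `2 ‖X‖₁`. This last bound comes from `‖X‖₁ = max {Re Tr (X S) : -1 ≤ S ≤ 1}` for Hermitian
`X` (the maximum is attained at `S = sign X`). Conversely `Π_U[ρ]` is itself classical-quantum,
with `σᵢ` the diagonal blocks of `(U ⊗ I)† ρ (U ⊗ I)`.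
-/

open scoped MatrixOrder

section TraceNorm

variable {ι : Type*} [Fintype ι] [DecidableEq ι]

lemma traceNorm_eq_re_trace_abs (A : Matrix ι ι ℂ) : traceNorm A = (CFC.abs A).trace.re := by
  have hA := Matrix.posSemidef_conjTranspose_mul_self A
  rw [CFC.abs, star_eq_conjTranspose, CFC.sqrt_eq_cfc, cfc_nnreal_eq_real _ _ hA.nonneg,
    hA.1.cfc_eq]
  simp only [IsHermitian.cfc, Unitary.conjStarAlgAut_apply, traceNorm]
  congr 5
  funext i
  simp [Real.coe_sqrt, hA.eigenvalues_nonneg i]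

lemma traceNorm_nonneg (A : Matrix ι ι ℂ) : 0 ≤ traceNorm A := by
  rw [traceNorm_eq_re_trace_abs]
  exact (Complex.nonneg_iff.mp (nonneg_iff_posSemidef.mp (CFC.abs_nonneg A)).trace_nonneg).1

lemma traceNorm_smul (c : ℝ) (A : Matrix ι ι ℂ) : traceNorm (c • A) = |c| * traceNorm A := by
  rw [traceNorm_eq_re_trace_abs, traceNorm_eq_re_trace_abs, CFC.abs_smul, trace_smul]
  simp

lemma Matrix.PosSemidef.trace_mul_nonneg {P Q : Matrix ι ι ℂ} (hP : P.PosSemidef)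
    (hQ : Q.PosSemidef) : 0 ≤ (P * Q).trace := by
  obtain ⟨B, rfl⟩ := CStarAlgebra.nonneg_iff_eq_star_mul_self.mp hQ.nonneg
  rw [← Matrix.mul_assoc, trace_mul_cycle]
  exact (hP.mul_mul_conjTranspose_same B).trace_nonneg

lemma re_trace_mul_le_traceNorm {X S : Matrix ι ι ℂ} (hX : X.IsHermitian) (hS₁ : -1 ≤ S)
    (hS₂ : S ≤ 1) : (X * S).trace.re ≤ traceNorm X := by
  have hX' : IsSelfAdjoint X := hX
  have hpos : 0 ≤ (X⁺ * (1 - S)).trace :=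
    (CFC.posPart_nonneg X).posSemidef.trace_mul_nonneg (sub_nonneg.mpr hS₂).posSemidef
  have hneg : 0 ≤ (X⁻ * (S + 1)).trace :=
    (CFC.negPart_nonneg X).posSemidef.trace_mul_nonneg (neg_le_iff_add_nonneg.mp hS₁).posSemidef
  have key : (CFC.abs X).trace - (X * S).trace = (X⁺ * (1 - S)).trace + (X⁻ * (S + 1)).trace := by
    have hXS : X * S = X⁺ * S - X⁻ * S := by rw [← Matrix.sub_mul, CFC.posPart_sub_negPart X]
    rw [← CFC.posPart_add_negPart X, hXS]
    simp only [Matrix.mul_sub, Matrix.mul_add, Matrix.mul_one, trace_add, trace_sub]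
    ring
  have := Complex.nonneg_iff.mp (add_nonneg hpos hneg)
  rw [← key, Complex.sub_re] at this
  rw [traceNorm_eq_re_trace_abs]
  linarith [this.1]

lemma exists_re_trace_mul_eq_traceNorm {X : Matrix ι ι ℂ} (hX : X.IsHermitian) :
    ∃ S : Matrix ι ι ℂ, -1 ≤ S ∧ S ≤ 1 ∧ (X * S).trace.re = traceNorm X := by
  have hX' : IsSelfAdjoint X := hX
  have hcont (f : ℝ → ℝ) : ContinuousOn f (spectrum ℝ X) := X.finite_real_spectrum.continuousOn f
  refine ⟨cfc (fun x : ℝ => (SignType.sign x : ℝ)) X, ?_, ?_, ?_⟩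
  · simpa using algebraMap_le_cfc _ (-1 : ℝ) X
      (fun x _ => by cases SignType.sign x <;> norm_num) (hcont _)
  · exact cfc_le_one _ X (fun x _ => by cases SignType.sign x <;> norm_num)
  · have hmul : X * cfc (fun x : ℝ => (SignType.sign x : ℝ)) X = cfc (fun x : ℝ => |x|) X := by
      nth_rw 1 [← cfc_id' ℝ X]
      rw [← cfc_mul _ _ X (hcont _) (hcont _)]
      simp_rw [self_mul_sign]
    rw [hmul, traceNorm_eq_re_trace_abs, CFC.abs_eq_cfc_norm X]
    simp_rw [Real.norm_eq_abs]

lemma traceNorm_sub_unitary_conj_le {X W : Matrix ι ι ℂ} (hX : X.IsHermitian)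
    (hW : W ∈ unitaryGroup ι ℂ) : traceNorm (X - Wᴴ * X * W) ≤ 2 * traceNorm X := by
  obtain ⟨S, hS₁, hS₂, hS⟩ :=
    exists_re_trace_mul_eq_traceNorm (hX.sub (isHermitian_conjTranspose_mul_mul W hX))
  have hWW : W * Wᴴ = 1 := Unitary.mul_star_self_of_mem hW
  have hconj {A B : Matrix ι ι ℂ} (h : A ≤ B) : W * A * Wᴴ ≤ W * B * Wᴴ := by
    simpa [star_eq_conjTranspose] using star_left_conjugate_le_conjugate h Wᴴ
  have hT₁ : -1 ≤ -(W * S * Wᴴ) := by simpa [hWW] using neg_le_neg (hconj hS₂)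
  have hT₂ : -(W * S * Wᴴ) ≤ 1 := by simpa [hWW] using neg_le_neg (hconj hS₁)
  have htr : ((X - Wᴴ * X * W) * S).trace = (X * S).trace + (X * -(W * S * Wᴴ)).trace := by
    rw [Matrix.sub_mul, trace_sub, Matrix.mul_neg, trace_neg, sub_eq_add_neg]
    simp only [Matrix.mul_assoc]
    rw [trace_mul_comm Wᴴ]
    simp only [Matrix.mul_assoc]
  rw [← hS, htr, Complex.add_re]
  linarith [re_trace_mul_le_traceNorm hX hS₁ hS₂, re_trace_mul_le_traceNorm hX hT₁ hT₂]

end TraceNorm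

lemma two_smul_sub_add_conj {R : Type*} [Ring R] {a b : R} (x : R) (hab : a + b = 1) :
    2 • (x - (a * x * a + b * x * b)) = x - (a - b) * x * (a - b) := by
  obtain rfl : b = 1 - a := eq_sub_of_add_eq' hab
  noncomm_ring

theorem Matrix.sub_kronecker {α l m n p : Type*} [NonUnitalNonAssocRing α]
    (A₁ A₂ : Matrix l m α) (B : Matrix n p α) : (A₁ - A₂) ⊗ₖ B = A₁ ⊗ₖ B - A₂ ⊗ₖ B := by
  ext
  simp [sub_mul]

section Blocks

variable {m n : ℕ}

lemma matUnit_kronecker_one_mul_mul (ρ : Matrix (Fin m × Fin n) (Fin m × Fin n) ℂ) (i : Fin m) :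
    (matUnit i i ⊗ₖ (1 : Matrix (Fin n) (Fin n) ℂ)) * ρ * (matUnit i i ⊗ₖ 1)
      = matUnit i i ⊗ₖ blockOf ρ i i := by
  ext ⟨a, k⟩ ⟨b, l⟩
  by_cases ha : i = a <;> by_cases hb : i = b <;>
    simp [mul_apply, matUnit, single, blockOf, one_apply, Fintype.sum_prod_type, ite_and, ha, hb]

lemma Matrix.PosSemidef.blockOf {ρ : Matrix (Fin m × Fin n) (Fin m × Fin n) ℂ} (hρ : ρ.PosSemidef)
    (i : Fin m) : (blockOf ρ i i).PosSemidef :=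
  hρ.submatrix (Prod.mk i)

lemma sum_trace_blockOf (ρ : Matrix (Fin m × Fin n) (Fin m × Fin n) ℂ) :
    ∑ i, (blockOf ρ i i).trace = ρ.trace := by
  simp [Matrix.trace, blockOf, Fintype.sum_prod_type]

lemma Matrix.PosSemidef.conjU (U : unitaryGroup (Fin m) ℂ)
    {ρ : Matrix (Fin m × Fin n) (Fin m × Fin n) ℂ} (hρ : ρ.PosSemidef) : (conjU U ρ).PosSemidef :=
  hρ.conjTranspose_mul_mul_same _

lemma trace_conjU (U : unitaryGroup (Fin m) ℂ) (ρ : Matrix (Fin m × Fin n) (Fin m × Fin n) ℂ) :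
    (conjU U ρ).trace = ρ.trace := by
  rw [conjU, trace_mul_cycle, ← star_eq_conjTranspose,
    Unitary.mul_star_self_of_mem (kronecker_mem_unitary U.2 (one_mem _)), Matrix.one_mul]

end Blocks

section Qubit

variable {n : ℕ} (U : unitaryGroup (Fin 2) ℂ)

def qubitProj (i : Fin 2) : Matrix (Fin 2) (Fin 2) ℂ :=
  (U : Matrix (Fin 2) (Fin 2) ℂ) * matUnit i i * (U : Matrix (Fin 2) (Fin 2) ℂ)ᴴ

def qubitRefl : Matrix (Fin 2) (Fin 2) ℂ := qubitProj U 0 - qubitProj U 1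

def cqState (σ₀ σ₁ : Matrix (Fin n) (Fin n) ℂ) : Matrix (Fin 2 × Fin n) (Fin 2 × Fin n) ℂ :=
  qubitProj U 0 ⊗ₖ σ₀ + qubitProj U 1 ⊗ₖ σ₁

lemma qubitProj_mul (i j : Fin 2) :
    qubitProj U i * qubitProj U j = if i = j then qubitProj U i else 0 := by
  have hU : (U : Matrix (Fin 2) (Fin 2) ℂ)ᴴ * U = 1 := U.2.1
  have : qubitProj U i * qubitProj U j = U * (matUnit i i * ((U : Matrix (Fin 2) (Fin 2) ℂ)ᴴ * U)
      * matUnit j j) * (U : Matrix (Fin 2) (Fin 2) ℂ)ᴴ := by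
    simp only [qubitProj, Matrix.mul_assoc]
  rw [this, hU, Matrix.mul_one]
  split_ifs with h
  · subst h
    simp [matUnit, qubitProj]
  · simp [matUnit, single_mul_single_of_ne _ _ _ _ h]

lemma qubitProj_zero_add_one : qubitProj U 0 + qubitProj U 1 = 1 := by
  have hU : (U : Matrix (Fin 2) (Fin 2) ℂ) * (U : Matrix (Fin 2) (Fin 2) ℂ)ᴴ = 1 := U.2.2
  rw [qubitProj, qubitProj, ← Matrix.add_mul, ← Matrix.mul_add, matUnit, matUnit,
    ← Fin.sum_univ_two (fun i => single i i (1 : ℂ)), sum_single_one, Matrix.mul_one, hU]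

lemma qubitProj_isHermitian (i : Fin 2) : (qubitProj U i).IsHermitian := by
  simp [qubitProj, IsHermitian, Matrix.mul_assoc, matUnit]

lemma qubitRefl_isHermitian : (qubitRefl U).IsHermitian :=
  (qubitProj_isHermitian U 0).sub (qubitProj_isHermitian U 1)

lemma qubitRefl_kronecker_one_mem_unitaryGroup :
    qubitRefl U ⊗ₖ (1 : Matrix (Fin n) (Fin n) ℂ) ∈ unitaryGroup (Fin 2 × Fin n) ℂ := by
  refine kronecker_mem_unitary ?_ (one_mem _)
  rw [← unitaryGroup, mem_unitaryGroup_iff, star_eq_conjTranspose, (qubitRefl_isHermitian U).eq]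
  simp [qubitRefl, Matrix.sub_mul, Matrix.mul_sub, qubitProj_mul, qubitProj_zero_add_one]

lemma qubitRefl_conj_cqState (σ₀ σ₁ : Matrix (Fin n) (Fin n) ℂ) :
    (qubitRefl U ⊗ₖ 1) * cqState U σ₀ σ₁ * (qubitRefl U ⊗ₖ 1) = cqState U σ₀ σ₁ := by
  simp [qubitRefl, cqState, Matrix.mul_add, Matrix.add_mul, ← mul_kronecker_mul, Matrix.sub_mul,
    Matrix.mul_sub, qubitProj_mul]

lemma two_smul_sub_dephase (ρ : Matrix (Fin 2 × Fin n) (Fin 2 × Fin n) ℂ) :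
    (2 : ℝ) • (ρ - dephase U ρ) = ρ - (qubitRefl U ⊗ₖ 1) * ρ * (qubitRefl U ⊗ₖ 1) := by
  have hd : dephase U ρ = (qubitProj U 0 ⊗ₖ 1) * ρ * (qubitProj U 0 ⊗ₖ 1)
      + (qubitProj U 1 ⊗ₖ 1) * ρ * (qubitProj U 1 ⊗ₖ 1) := by
    simp [dephase, Fin.sum_univ_two, qubitProj]
  have hsum : qubitProj U 0 ⊗ₖ (1 : Matrix (Fin n) (Fin n) ℂ) + qubitProj U 1 ⊗ₖ 1 = 1 := by
    rw [← add_kronecker, qubitProj_zero_add_one, one_kronecker_one]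
  rw [hd, ofNat_smul_eq_nsmul, two_smul_sub_add_conj ρ hsum, qubitRefl, sub_kronecker]

lemma qubitProj_kronecker_one_mul_mul (ρ : Matrix (Fin 2 × Fin n) (Fin 2 × Fin n) ℂ) (i : Fin 2) :
    (qubitProj U i ⊗ₖ (1 : Matrix (Fin n) (Fin n) ℂ)) * ρ * (qubitProj U i ⊗ₖ 1)
      = qubitProj U i ⊗ₖ blockOf (conjU U ρ) i i := by
  set V := (U : Matrix (Fin 2) (Fin 2) ℂ) ⊗ₖ (1 : Matrix (Fin n) (Fin n) ℂ)
  have hP : qubitProj U i ⊗ₖ (1 : Matrix (Fin n) (Fin n) ℂ) = V * (matUnit i i ⊗ₖ 1) * Vᴴ := by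
    simp [V, qubitProj, conjTranspose_kronecker, ← mul_kronecker_mul]
  have : V * (matUnit i i ⊗ₖ 1) * Vᴴ * ρ * (V * (matUnit i i ⊗ₖ 1) * Vᴴ)
      = V * ((matUnit i i ⊗ₖ 1) * conjU U ρ * (matUnit i i ⊗ₖ 1)) * Vᴴ := by
    simp only [conjU, V, Matrix.mul_assoc]
  rw [hP, this, matUnit_kronecker_one_mul_mul]
  simp [V, qubitProj, conjTranspose_kronecker, ← mul_kronecker_mul]

lemma dephase_eq_cqState (ρ : Matrix (Fin 2 × Fin n) (Fin 2 × Fin n) ℂ) :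
    dephase U ρ = cqState U (blockOf (conjU U ρ) 0 0) (blockOf (conjU U ρ) 1 1) := by
  simp only [dephase, Fin.sum_univ_two]
  exact congrArg₂ (· + ·) (qubitProj_kronecker_one_mul_mul U ρ 0)
    (qubitProj_kronecker_one_mul_mul U ρ 1)

lemma exists_cqState_eq_dephase {ρ : Matrix (Fin 2 × Fin n) (Fin 2 × Fin n) ℂ}
    (hρ : ρ.PosSemidef) (htr : ρ.trace = 1) :
    ∃ σ₀ σ₁ : Matrix (Fin n) (Fin n) ℂ, σ₀.PosSemidef ∧ σ₁.PosSemidef ∧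
      σ₀.trace + σ₁.trace = 1 ∧ dephase U ρ = cqState U σ₀ σ₁ := by
  refine ⟨_, _, (hρ.conjU U).blockOf 0, (hρ.conjU U).blockOf 1, ?_, dephase_eq_cqState U ρ⟩
  rw [← Fin.sum_univ_two (fun i => (blockOf (conjU U ρ) i i).trace), sum_trace_blockOf,
    trace_conjU, htr]

lemma traceNorm_sub_dephase_le {ρ : Matrix (Fin 2 × Fin n) (Fin 2 × Fin n) ℂ} (hρ : ρ.IsHermitian)
    {σ₀ σ₁ : Matrix (Fin n) (Fin n) ℂ} (h₀ : σ₀.IsHermitian) (h₁ : σ₁.IsHermitian) :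
    traceNorm (ρ - dephase U ρ) ≤ traceNorm (ρ - cqState U σ₀ σ₁) := by
  set W := qubitRefl U ⊗ₖ (1 : Matrix (Fin n) (Fin n) ℂ)
  set σ := cqState U σ₀ σ₁
  have hσ : σ.IsHermitian := by
    simp only [IsHermitian, σ, cqState, conjTranspose_add, conjTranspose_kronecker,
      (qubitProj_isHermitian U 0).eq, (qubitProj_isHermitian U 1).eq, h₀.eq, h₁.eq]
  have hW : Wᴴ = W := by
    rw [conjTranspose_kronecker, (qubitRefl_isHermitian U).eq, conjTranspose_one]
  have key : (2 : ℝ) • (ρ - dephase U ρ) = (ρ - σ) - Wᴴ * (ρ - σ) * W := by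
    rw [two_smul_sub_dephase, hW, mul_sub W ρ σ, sub_mul _ _ W, qubitRefl_conj_cqState]
    abel
  have := traceNorm_sub_unitary_conj_le (hρ.sub hσ) (qubitRefl_kronecker_one_mem_unitaryGroup U)
  rw [← key, traceNorm_smul, abs_two] at this
  linarith

end Qubit

/-- for any state on `ℂ² ⊗ ℂ^n`, the minimal trace-norm disturbance under
local dephasing of the qubit equals the minimal trace-norm distance from the set of
classical-quantum states. -/
theorem stmt_8 {n : ℕ} (ρ : Matrix (Fin 2 × Fin n) (Fin 2 × Fin n) ℂ)
    (hpos : ρ.PosSemidef) (htr : ρ.trace = 1) :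
    (⨅ U : Matrix.unitaryGroup (Fin 2) ℂ, traceNorm (ρ - dephase U ρ))
      = sInf { r : ℝ | ∃ (U : Matrix.unitaryGroup (Fin 2) ℂ)
          (σ0 σ1 : Matrix (Fin n) (Fin n) ℂ),
          σ0.PosSemidef ∧ σ1.PosSemidef ∧ σ0.trace + σ1.trace = 1 ∧
          r = traceNorm (ρ -
            (((U : Matrix (Fin 2) (Fin 2) ℂ) * matUnit (0 : Fin 2) 0
                * (U : Matrix (Fin 2) (Fin 2) ℂ)ᴴ) ⊗ₖ σ0
              + ((U : Matrix (Fin 2) (Fin 2) ℂ) * matUnit (1 : Fin 2) 1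
                * (U : Matrix (Fin 2) (Fin 2) ℂ)ᴴ) ⊗ₖ σ1)) } := by
  set S := { r : ℝ | ∃ (U : Matrix.unitaryGroup (Fin 2) ℂ) (σ0 σ1 : Matrix (Fin n) (Fin n) ℂ),
    σ0.PosSemidef ∧ σ1.PosSemidef ∧ σ0.trace + σ1.trace = 1 ∧
    r = traceNorm (ρ - cqState U σ0 σ1) }
  have hmem (U : unitaryGroup (Fin 2) ℂ) : traceNorm (ρ - dephase U ρ) ∈ S := by
    obtain ⟨σ₀, σ₁, h₀, h₁, hσtr, hσ⟩ := exists_cqState_eq_dephase U hpos htr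
    exact ⟨U, σ₀, σ₁, h₀, h₁, hσtr, by rw [hσ]⟩
  have hbdd : BddBelow (Set.range fun U : unitaryGroup (Fin 2) ℂ => traceNorm (ρ - dephase U ρ)) :=
    ⟨0, by rintro _ ⟨U, rfl⟩; exact traceNorm_nonneg _⟩
  refine le_antisymm (le_csInf ⟨_, hmem 1⟩ ?_) (le_ciInf fun U => csInf_le ⟨0, ?_⟩ (hmem U))
  · rintro r ⟨U, σ₀, σ₁, h₀, h₁, -, rfl⟩
    exact (ciInf_le hbdd U).trans (traceNorm_sub_dephase_le U hpos.1 h₀.1 h₁.1)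
  · rintro r ⟨-, -, -, -, -, -, rfl⟩
    exact traceNorm_nonneg _
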